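/- arXiv:1407.7483 — 2 statements merged into one kernel-verified Lean document; each statement's English description precedes it below -/
import Mathlib

section
/- Let S be an ordered semigroup, X a subset of S, and Q := (X ∪ ((XS] ∩ (SX])]. Then (QS] ∩ (SQ] ⊆ Q. -/
/-! Write `R := (XS]` and `L := (SX]`. Since `XS·S ⊆ XS` and right multiplication is monotone,
`(X ∪ R]S ⊆ R`; as `Q ⊆ (X ∪ R]`, this gives `(QS] ⊆ R`, and symmetrically `(SQ] ⊆ L`.
Thus `(QS] ∩ (SQ] ⊆ R ∩ L ⊆ Q`. -/

open Pointwise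

/-- The "downward closure" `(A] = {t | t ≤ a for some a ∈ A}`. -/
def dcl {S : Type*} [LE S] (A : Set S) : Set S := {t | ∃ a ∈ A, t ≤ a}

section Preorder

variable {S : Type*} [Preorder S]

theorem subset_dcl (A : Set S) : A ⊆ dcl A :=
  fun a ha => ⟨a, ha, le_rfl⟩

theorem dcl_mono {A B : Set S} (h : A ⊆ B) : dcl A ⊆ dcl B :=
  fun _ ⟨a, ha, hta⟩ => ⟨a, h ha, hta⟩

theorem dcl_subset_dcl_of_subset_dcl {A B : Set S} (h : A ⊆ dcl B) : dcl A ⊆ dcl B := by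
  rintro t ⟨a, ha, hta⟩
  obtain ⟨b, hb, hab⟩ := h ha
  exact ⟨b, hb, hta.trans hab⟩

theorem dcl_mul_subset [Mul S] [MulRightMono S] (A B : Set S) : dcl A * B ⊆ dcl (A * B) := by
  rintro _ ⟨t, ⟨a, ha, hta⟩, b, hb, rfl⟩
  exact ⟨a * b, Set.mul_mem_mul ha hb, mul_le_mul_left hta b⟩

theorem mul_dcl_subset [Mul S] [MulLeftMono S] (A B : Set S) : A * dcl B ⊆ dcl (A * B) := by
  rintro _ ⟨a, ha, t, ⟨b, hb, htb⟩, rfl⟩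
  exact ⟨a * b, Set.mul_mem_mul ha hb, mul_le_mul_right htb a⟩

end Preorder

theorem Set.mul_univ_mul_univ_subset {S : Type*} [Semigroup S] (X : Set S) :
    X * Set.univ * Set.univ ⊆ X * Set.univ := by
  rw [mul_assoc]
  exact Set.mul_subset_mul_left (Set.subset_univ _)

theorem Set.univ_mul_univ_mul_subset {S : Type*} [Semigroup S] (X : Set S) :
    Set.univ * (Set.univ * X) ⊆ Set.univ * X := by
  rw [← mul_assoc]
  exact Set.mul_subset_mul_right (Set.subset_univ _)

section OrderedSemigroup

variable {S : Type*} [Semigroup S] [Preorder S]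

theorem dcl_mul_univ_subset_of_subset [MulRightMono S] {X Q : Set S}
    (hQ : Q ⊆ dcl (X ∪ dcl (X * Set.univ))) : dcl (Q * Set.univ) ⊆ dcl (X * Set.univ) := by
  have hR : dcl (X * Set.univ) * Set.univ ⊆ dcl (X * Set.univ) :=
    (dcl_mul_subset _ _).trans (dcl_mono (Set.mul_univ_mul_univ_subset X))
  refine dcl_subset_dcl_of_subset_dcl ?_
  calc Q * Set.univ ⊆ dcl ((X ∪ dcl (X * Set.univ)) * Set.univ) :=
        (Set.mul_subset_mul_right hQ).trans (dcl_mul_subset _ _)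
    _ = dcl (X * Set.univ ∪ dcl (X * Set.univ) * Set.univ) := by rw [Set.union_mul]
    _ ⊆ dcl (X * Set.univ) :=
        dcl_subset_dcl_of_subset_dcl (Set.union_subset (subset_dcl _) hR)

theorem dcl_univ_mul_subset_of_subset [MulLeftMono S] {X Q : Set S}
    (hQ : Q ⊆ dcl (X ∪ dcl (Set.univ * X))) : dcl (Set.univ * Q) ⊆ dcl (Set.univ * X) := by
  have hL : Set.univ * dcl (Set.univ * X) ⊆ dcl (Set.univ * X) :=
    (mul_dcl_subset _ _).trans (dcl_mono (Set.univ_mul_univ_mul_subset X))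
  refine dcl_subset_dcl_of_subset_dcl ?_
  calc Set.univ * Q ⊆ dcl (Set.univ * (X ∪ dcl (Set.univ * X))) :=
        (Set.mul_subset_mul_left hQ).trans (mul_dcl_subset _ _)
    _ = dcl (Set.univ * X ∪ Set.univ * dcl (Set.univ * X)) := by rw [Set.mul_union]
    _ ⊆ dcl (Set.univ * X) :=
        dcl_subset_dcl_of_subset_dcl (Set.union_subset (subset_dcl _) hL)

end OrderedSemigroup
/-- For `Q = (X ∪ ((XS] ∩ (SX])]`, we have `(QS] ∩ (SQ] ⊆ Q`. -/
theorem Q_quasi_property {S : Type*} [Semigroup S] [PartialOrder S]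
    [CovariantClass S S (· * ·) (· ≤ ·)]
    [CovariantClass S S (Function.swap (· * ·)) (· ≤ ·)]
    (X : Set S) (Q : Set S)
    (hQ : Q = dcl (X ∪ (dcl (X * Set.univ) ∩ dcl (Set.univ * X)))) :
    dcl (Q * Set.univ) ∩ dcl (Set.univ * Q) ⊆ Q := by
  have hQR : Q ⊆ dcl (X ∪ dcl (X * Set.univ)) :=
    hQ ▸ dcl_mono (Set.union_subset_union_right _ Set.inter_subset_left)
  have hQL : Q ⊆ dcl (X ∪ dcl (Set.univ * X)) :=
    hQ ▸ dcl_mono (Set.union_subset_union_right _ Set.inter_subset_right)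
  calc dcl (Q * Set.univ) ∩ dcl (Set.univ * Q)
      ⊆ dcl (X * Set.univ) ∩ dcl (Set.univ * X) :=
        Set.inter_subset_inter (dcl_mul_univ_subset_of_subset hQR) (dcl_univ_mul_subset_of_subset hQL)
    _ ⊆ Q := hQ ▸ (Set.subset_union_right.trans (subset_dcl _))
end

section
/- Let S be an le-semigroup with greatest element e. Suppose that x ∧ q ∧ y ≤ yqx for every right ideal element x, every left ideal element y, and every quasi-ideal element q of S. Then S is intra-regular, i.e., a ≤ ea²e for every a ∈ S. -/
/-!
Apply the hypothesis to the right ideal element `x = a ⊔ ae`, the left ideal element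
`y = a ⊔ ea` and the quasi-ideal element `q = a ⊔ (ae ⊓ ea)`, all lying above `a`. Since
`yq ≤ ea` and `qx ≤ ae`, this gives `a ≤ ea(a ⊔ ae) = ea² ⊔ ea²e` and
`a ≤ (a ⊔ ea)ae = a²e ⊔ ea²e`. Substituting the second bound into `ea² = ea · a` shows
`ea² ≤ ea²e`, so the first bound collapses to `a ≤ ea²e`.
-/

section LeSemigroup

variable {S : Type*} [Semigroup S] [Lattice S]

theorem mulLeftMono_of_mul_sup (hld : ∀ a b c : S, a * (b ⊔ c) = a * b ⊔ a * c) :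
    MulLeftMono S :=
  ⟨fun a b c hbc => calc
    a * b ≤ a * b ⊔ a * c := le_sup_left
    _ = a * c := by rw [← hld, sup_eq_right.mpr hbc]⟩

theorem mulRightMono_of_sup_mul (hrd : ∀ a b c : S, (a ⊔ b) * c = a * c ⊔ b * c) :
    MulRightMono S :=
  ⟨fun a b c hbc => calc
    b * a ≤ b * a ⊔ c * a := le_sup_left
    _ = c * a := by rw [← hrd, sup_eq_right.mpr hbc]⟩

def IsRightIdealElem (e x : S) : Prop := x * e ≤ x

def IsLeftIdealElem (e y : S) : Prop := e * y ≤ y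

def IsQuasiIdealElem (e q : S) : Prop := q * e ⊓ e * q ≤ q

section GreatestElement

variable [MulLeftMono S] [MulRightMono S] {e : S} (he : ∀ a : S, a ≤ e)
include he

theorem sup_mul_top_le (hrd : ∀ a b c : S, (a ⊔ b) * c = a * c ⊔ b * c) {a c : S}
    (hc : c ≤ a * e) : (a ⊔ c) * e ≤ a * e := by
  rw [hrd]
  refine sup_le le_rfl ?_
  calc c * e ≤ a * e * e := mul_le_mul_left hc e
    _ = a * (e * e) := mul_assoc _ _ _
    _ ≤ a * e := mul_le_mul_right (he _) a

theorem top_mul_sup_le (hld : ∀ a b c : S, a * (b ⊔ c) = a * b ⊔ a * c) {a c : S}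
    (hc : c ≤ e * a) : e * (a ⊔ c) ≤ e * a := by
  rw [hld]
  refine sup_le le_rfl ?_
  calc e * c ≤ e * (e * a) := mul_le_mul_right hc e
    _ = e * e * a := (mul_assoc _ _ _).symm
    _ ≤ e * a := mul_le_mul_left (he _) a

theorem isRightIdealElem_sup_mul_top (hrd : ∀ a b c : S, (a ⊔ b) * c = a * c ⊔ b * c) (a : S) :
    IsRightIdealElem e (a ⊔ a * e) :=
  (sup_mul_top_le he hrd le_rfl).trans le_sup_right

theorem isLeftIdealElem_sup_top_mul (hld : ∀ a b c : S, a * (b ⊔ c) = a * b ⊔ a * c) (a : S) :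
    IsLeftIdealElem e (a ⊔ e * a) :=
  (top_mul_sup_le he hld le_rfl).trans le_sup_right

theorem isQuasiIdealElem_sup_inf (hld : ∀ a b c : S, a * (b ⊔ c) = a * b ⊔ a * c)
    (hrd : ∀ a b c : S, (a ⊔ b) * c = a * c ⊔ b * c) (a : S) :
    IsQuasiIdealElem e (a ⊔ (a * e ⊓ e * a)) :=
  (inf_le_inf (sup_mul_top_le he hrd inf_le_left) (top_mul_sup_le he hld inf_le_right)).trans
    le_sup_right

theorem top_mul_sq_le_of_le_sup (hld : ∀ a b c : S, a * (b ⊔ c) = a * b ⊔ a * c) {a : S}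
    (ha : a ≤ a * a * e ⊔ e * (a * a) * e) : e * (a * a) ≤ e * (a * a) * e := calc
  e * (a * a) = e * a * a := (mul_assoc _ _ _).symm
  _ ≤ e * a * (a * a * e ⊔ e * (a * a) * e) := mul_le_mul_right ha _
  _ = (e * a) * (a * a) * e ⊔ (e * a * e) * (a * a) * e := by
    rw [hld]; simp only [mul_assoc]
  _ ≤ e * (a * a) * e := by
    exact sup_le (mul_le_mul_left (mul_le_mul_left (he _) _) e)
      (mul_le_mul_left (mul_le_mul_left (he _) _) e)

end GreatestElement

end LeSemigroup

/-- If `x ∧ q ∧ y ≤ yqx` for every right ideal element x, left ideal element y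
and quasi-ideal element q of an le-semigroup, then S is intra-regular. -/
theorem le_quasi_condition_implies_intra_regular {S : Type*} [Semigroup S] [Lattice S]
    (e : S) (he : ∀ a : S, a ≤ e)
    (hld : ∀ a b c : S, a * (b ⊔ c) = a * b ⊔ a * c)
    (hrd : ∀ a b c : S, (a ⊔ b) * c = a * c ⊔ b * c)
    (h : ∀ x y q : S, x * e ≤ x → e * y ≤ y → q * e ⊓ e * q ≤ q →
      x ⊓ q ⊓ y ≤ y * q * x) :
    ∀ a : S, a ≤ e * (a * a) * e := by
  have := mulLeftMono_of_mul_sup hld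
  have := mulRightMono_of_sup_mul hrd
  intro a
  set x := a ⊔ a * e
  set y := a ⊔ e * a
  set q := a ⊔ (a * e ⊓ e * a)
  have key : a ≤ y * q * x :=
    (le_inf (le_inf le_sup_left le_sup_left) le_sup_left).trans
      (h x y q (isRightIdealElem_sup_mul_top he hrd a) (isLeftIdealElem_sup_top_mul he hld a)
        (isQuasiIdealElem_sup_inf he hld hrd a))
  have hyq : y * q ≤ e * a :=
    (mul_le_mul_left (he y) q).trans (top_mul_sup_le he hld inf_le_right)
  have hqx : q * x ≤ a * e :=
    (mul_le_mul_right (he x) q).trans (sup_mul_top_le he hrd inf_le_left)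
  have hleft : a ≤ e * (a * a) ⊔ e * (a * a) * e := calc
    a ≤ e * a * x := key.trans (mul_le_mul_left hyq x)
    _ = e * (a * a) ⊔ e * (a * a) * e := by rw [hld]; simp only [mul_assoc]
  have hright : a ≤ a * a * e ⊔ e * (a * a) * e := calc
    a ≤ y * (a * e) := (key.trans_eq (mul_assoc _ _ _)).trans (mul_le_mul_right hqx y)
    _ = a * a * e ⊔ e * (a * a) * e := by rw [hrd]; simp only [mul_assoc]
  exact hleft.trans (sup_le (top_mul_sq_le_of_le_sup he hld hright) le_rfl)
end
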